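/- For every n ≥ 0, the identity (x + y)·Λ_n(x,y) = L_n(x,y) + W_n(x,y) holds in ℚ[x,y], where Λ_n(x,y) = Σ_{k} Λ(n,k)·x^k·y^{n−k} (with Λ_0(x,y) = 1), L_n(x,y) is the bivariate left peak polynomial, and W_n(x,y) is the bivariate exterior peak polynomial. -/

import Mathlib

open MvPolynomial

/-- The `i`-th entry (1-indexed) of the permutation `σ` of `[n]`, with the
convention that positions `0` and `> n` carry the entry `0`. -/
def permEntry (n : ℕ) (σ : Equiv.Perm (Fin n)) (i : ℕ) : ℕ :=
  if h : 1 ≤ i ∧ i ≤ n then ((σ ⟨i - 1, by omega⟩ : Fin n) : ℕ) + 1 else 0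

/-- The number of left peaks of `σ`: indices `1 ≤ i ≤ n-1` with
`σ_{i-1} < σ_i > σ_{i+1}`, convention `σ₀ = 0`. -/
def leftPeakCount (n : ℕ) (σ : Equiv.Perm (Fin n)) : ℕ :=
  ((Finset.Icc 1 (n - 1)).filter fun i =>
    permEntry n σ (i - 1) < permEntry n σ i ∧ permEntry n σ (i + 1) < permEntry n σ i).card

/-- The number of exterior peaks of `σ`: indices `1 ≤ i ≤ n` with
`σ_{i-1} < σ_i > σ_{i+1}`, conventions `σ₀ = σ_{n+1} = 0`. -/
def extPeakCount (n : ℕ) (σ : Equiv.Perm (Fin n)) : ℕ :=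
  ((Finset.Icc 1 n).filter fun i =>
    permEntry n σ (i - 1) < permEntry n σ i ∧ permEntry n σ (i + 1) < permEntry n σ i).card

/-- The number of interior peaks of `σ`: indices `2 ≤ i ≤ n-1` with
`σ_{i-1} < σ_i > σ_{i+1}`. -/
def intPeakCount (n : ℕ) (σ : Equiv.Perm (Fin n)) : ℕ :=
  ((Finset.Icc 2 (n - 1)).filter fun i =>
    permEntry n σ (i - 1) < permEntry n σ i ∧ permEntry n σ (i + 1) < permEntry n σ i).card

/-- The number of up-down runs of `σ`: maximal monotone segments of the
extended sequence `0, σ₁, …, σₙ`, i.e. one more than the number of direction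
changes of that sequence (and `0` for `n = 0`). -/
def udRunCount (n : ℕ) (σ : Equiv.Perm (Fin n)) : ℕ :=
  if n = 0 then 0 else
    1 + ((Finset.Icc 1 (n - 1)).filter fun i =>
      (permEntry n σ (i - 1) < permEntry n σ i ∧ permEntry n σ (i + 1) < permEntry n σ i) ∨
      (permEntry n σ i < permEntry n σ (i - 1) ∧ permEntry n σ i < permEntry n σ (i + 1))).card

/-- The number of alternating runs of `σ`: maximal monotone segments of
`σ₁, …, σₙ`, i.e. one more than the number of direction changes (and `0` for `n = 0`). -/
def altRunCount (n : ℕ) (σ : Equiv.Perm (Fin n)) : ℕ :=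
  if n = 0 then 0 else
    1 + ((Finset.Icc 2 (n - 1)).filter fun i =>
      (permEntry n σ (i - 1) < permEntry n σ i ∧ permEntry n σ (i + 1) < permEntry n σ i) ∨
      (permEntry n σ i < permEntry n σ (i - 1) ∧ permEntry n σ i < permEntry n σ (i + 1))).card

/-- `L n k` : the number of permutations of `[n]` with exactly `k` left peaks. -/
def leftPeakNum (n k : ℕ) : ℕ :=
  (Finset.univ.filter fun σ : Equiv.Perm (Fin n) => leftPeakCount n σ = k).card

/-- `W n k` : the number of permutations of `[n]` with exactly `k` exterior peaks. -/
def extPeakNum (n k : ℕ) : ℕ :=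
  (Finset.univ.filter fun σ : Equiv.Perm (Fin n) => extPeakCount n σ = k).card

/-- `M n k` : the number of permutations of `[n]` with exactly `k` interior peaks. -/
def intPeakNum (n k : ℕ) : ℕ :=
  (Finset.univ.filter fun σ : Equiv.Perm (Fin n) => intPeakCount n σ = k).card

/-- `Λ n k` : the number of permutations of `[n]` with exactly `k` up-down runs. -/
def udRunNum (n k : ℕ) : ℕ :=
  (Finset.univ.filter fun σ : Equiv.Perm (Fin n) => udRunCount n σ = k).card

/-- `R n k` : the number of permutations of `[n]` with exactly `k` alternating runs. -/
def altRunNum (n k : ℕ) : ℕ :=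
  (Finset.univ.filter fun σ : Equiv.Perm (Fin n) => altRunCount n σ = k).card

/-- The bivariate up-down run polynomial `Λ_n(x,y) = Σ_k Λ(n,k)·x^k·y^{n−k}`. -/
noncomputable def UDb (n : ℕ) : MvPolynomial (Fin 2) ℚ :=
  ∑ k ∈ Finset.range (n + 1),
    (udRunNum n k : MvPolynomial (Fin 2) ℚ) * X 0 ^ k * X 1 ^ (n - k)

/-- The bivariate left peak polynomial
`L_n(x,y) = Σ_{k=0}^{⌊n/2⌋} L(n,k)·x^{2k+1}·y^{n−2k}`. -/
noncomputable def Lb (n : ℕ) : MvPolynomial (Fin 2) ℚ :=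
  ∑ k ∈ Finset.range (n / 2 + 1),
    (leftPeakNum n k : MvPolynomial (Fin 2) ℚ) * X 0 ^ (2 * k + 1) * X 1 ^ (n - 2 * k)

/-- The bivariate exterior peak polynomial
`W_n(x,y) = Σ_{k=1}^{⌊(n+1)/2⌋} W(n,k)·x^{2k}·y^{n−2k+1}`, with `W_0(x,y) = y`. -/
noncomputable def Wb (n : ℕ) : MvPolynomial (Fin 2) ℚ :=
  if n = 0 then X 1 else
    ∑ k ∈ Finset.Icc 1 ((n + 1) / 2),
      (extPeakNum n k : MvPolynomial (Fin 2) ℚ) * X 0 ^ (2 * k) * X 1 ^ (n + 1 - 2 * k)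

/-!
Everything reduces to one permutation at a time. Along `0, σ₁, …, σₙ, 0` peaks and valleys
alternate, beginning and ending with a peak, so the exterior peaks outnumber the valleys at
positions `1, …, n - 1` by one. Hence the number of up-down runs, `1 + lpk σ + #valleys`, equals
`lpk σ + epk σ`, while `epk σ - lpk σ ∈ {0, 1}` records whether `n` is a peak. In either case
`(x + y) x^(lpk + epk) y^(n - lpk - epk) = x^(2 lpk + 1) y^(n - 2 lpk) + x^(2 epk) y^(n + 1 - 2 epk)`,
and summing over `σ` gives the identity.
-/

open Finset

section PeaksValleys

variable {α : Type*} [LinearOrder α] (a : ℕ → α)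

def peaksIn (s : Finset ℕ) : Finset ℕ :=
  s.filter fun i => a (i - 1) < a i ∧ a (i + 1) < a i

def valleysIn (s : Finset ℕ) : Finset ℕ :=
  s.filter fun i => a i < a (i - 1) ∧ a i < a (i + 1)

variable {a}

lemma ite_peak_add_ite_rise {i : ℕ} (h₁ : a (i - 1) ≠ a i) (h₂ : a i ≠ a (i + 1)) :
    ((if a (i - 1) < a i ∧ a (i + 1) < a i then 1 else 0) + if a i < a (i + 1) then 1 else 0) =
      (if a i < a (i - 1) ∧ a i < a (i + 1) then 1 else 0) + if a (i - 1) < a i then 1 else 0 := by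
  rcases h₁.lt_or_gt with h₁ | h₁ <;> rcases h₂.lt_or_gt with h₂ | h₂ <;>
    simp [h₁, h₂, h₁.not_gt, h₂.not_gt]

/-- Peaks and valleys alternate along a sequence without repeated consecutive values. -/
theorem card_peaksIn_add_ite_rise_eq (h₀ : a 0 < a 1) {m : ℕ}
    (hne : ∀ i ∈ Icc 1 m, a i ≠ a (i + 1)) :
    #(peaksIn a (Icc 1 m)) + (if a m < a (m + 1) then 1 else 0) =
      #(valleysIn a (Icc 1 m)) + 1 := by
  induction m with
  | zero => simp [peaksIn, valleysIn, h₀]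
  | succ m ih =>
    have hstep : a m ≠ a (m + 1) := by
      rcases m.eq_zero_or_pos with rfl | hm
      · exact h₀.ne
      · exact hne m (by simp; omega)
    have hturn := ite_peak_add_ite_rise (i := m + 1) (by simpa using hstep) (hne _ (by simp))
    have ih := ih fun i hi => hne i (by simp at hi ⊢; omega)
    simp only [peaksIn, valleysIn, card_filter, sum_Icc_succ_top (by omega : 1 ≤ m + 1),
      add_tsub_cancel_right] at ih hturn ⊢
    omega

lemma disjoint_peaksIn_valleysIn (s : Finset ℕ) : Disjoint (peaksIn a s) (valleysIn a s) :=
  disjoint_filter.2 fun _ _ h h' => h.1.not_gt h'.1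

end PeaksValleys

lemma sum_card_filter_mul_eq_sum {ι κ R : Type*} [Fintype ι] [DecidableEq κ] [NonAssocSemiring R]
    (g : ι → κ) {t : Finset κ} (hg : ∀ i, g i ∈ t) (f : κ → R) :
    ∑ k ∈ t, (#{i | g i = k} : R) * f k = ∑ i, f (g i) := by
  rw [← sum_fiberwise_of_maps_to (fun i _ => hg i) (fun i => f (g i))]
  refine sum_congr rfl fun k _ => ?_
  rw [sum_congr rfl fun i hi => by rw [(mem_filter.1 hi).2], sum_const, nsmul_eq_mul]

section Permutation

variable {n : ℕ} (σ : Equiv.Perm (Fin n))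

lemma permEntry_zero : permEntry n σ 0 = 0 := by
  simp [permEntry]

lemma permEntry_of_lt {i : ℕ} (h : n < i) : permEntry n σ i = 0 := by
  rw [permEntry, dif_neg (by omega)]

lemma permEntry_pos {i : ℕ} (h₁ : 1 ≤ i) (h₂ : i ≤ n) : 0 < permEntry n σ i := by
  rw [permEntry, dif_pos ⟨h₁, h₂⟩]
  omega

lemma permEntry_injOn : Set.InjOn (permEntry n σ) (Set.Icc 1 n) := by
  rintro i ⟨hi₁, hi₂⟩ j ⟨hj₁, hj₂⟩ h
  rw [permEntry, permEntry, dif_pos ⟨hi₁, hi₂⟩, dif_pos ⟨hj₁, hj₂⟩, add_left_inj, Fin.val_inj,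
    σ.injective.eq_iff, Fin.mk.injEq] at h
  omega

lemma extPeakCount_eq_leftPeakCount_add (hn : n ≠ 0) :
    extPeakCount n σ =
      leftPeakCount n σ + if permEntry n σ (n - 1) < permEntry n σ n then 1 else 0 := by
  obtain ⟨m, rfl⟩ := Nat.exists_eq_add_one_of_ne_zero hn
  have hlast := permEntry_pos σ (i := m + 1) (by omega) le_rfl
  have hafter := permEntry_of_lt σ (lt_add_one (m + 1))
  simp only [extPeakCount, leftPeakCount, card_filter, sum_Icc_succ_top (by omega : 1 ≤ m + 1),
    add_tsub_cancel_right, hafter, hlast, and_true]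

lemma udRunCount_eq (hn : n ≠ 0) :
    udRunCount n σ = 1 + leftPeakCount n σ + #(valleysIn (permEntry n σ) (Icc 1 (n - 1))) := by
  rw [udRunCount, if_neg hn, filter_or]
  change 1 + #(peaksIn _ _ ∪ valleysIn _ _) = _
  rw [card_union_of_disjoint (disjoint_peaksIn_valleysIn _), add_assoc]
  rfl

lemma extPeakCount_eq_card_valleysIn_add_one (hn : n ≠ 0) :
    extPeakCount n σ = #(valleysIn (permEntry n σ) (Icc 1 (n - 1))) + 1 := by
  have h₀ : permEntry n σ 0 < permEntry n σ 1 := by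
    rw [permEntry_zero]
    exact permEntry_pos σ le_rfl (by omega)
  have hne : ∀ i ∈ Icc 1 (n - 1), permEntry n σ i ≠ permEntry n σ (i + 1) := fun i hi h => by
    rw [mem_Icc] at hi
    have := permEntry_injOn σ ⟨hi.1, by omega⟩ ⟨by omega, by omega⟩ h
    omega
  have := card_peaksIn_add_ite_rise_eq h₀ hne
  rw [Nat.sub_add_cancel (by omega)] at this
  rw [extPeakCount_eq_leftPeakCount_add σ hn, ← this]
  rfl

lemma udRunCount_eq_leftPeakCount_add_extPeakCount (hn : n ≠ 0) :
    udRunCount n σ = leftPeakCount n σ + extPeakCount n σ := by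
  rw [udRunCount_eq σ hn, extPeakCount_eq_card_valleysIn_add_one σ hn]
  ring

lemma extPeakCount_eq_leftPeakCount_or (hn : n ≠ 0) :
    extPeakCount n σ = leftPeakCount n σ ∨ extPeakCount n σ = leftPeakCount n σ + 1 := by
  rw [extPeakCount_eq_leftPeakCount_add σ hn]
  split_ifs <;> simp

lemma udRunCount_le : udRunCount n σ ≤ n := by
  unfold udRunCount
  split_ifs with hn
  · exact Nat.zero_le n
  · grw [card_filter_le, Nat.card_Icc]
    omega

end Permutation

lemma add_mul_monomial_eq_peak_monomials {R : Type*} [CommSemiring R] (x y : R) {n l e : ℕ}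
    (he : e = l ∨ e = l + 1) (hn : l + e ≤ n) :
    (x + y) * (x ^ (l + e) * y ^ (n - (l + e))) =
      x ^ (2 * l + 1) * y ^ (n - 2 * l) + x ^ (2 * e) * y ^ (n + 1 - 2 * e) := by
  obtain ⟨k, rfl⟩ := Nat.exists_eq_add_of_le hn
  rcases he with rfl | rfl
  · rw [show e + e + k - 2 * e = k by omega, show e + e + k + 1 - 2 * e = k + 1 by omega,
      Nat.add_sub_cancel_left]
    ring
  · rw [show l + (l + 1) + k - 2 * l = k + 1 by omega,
      show l + (l + 1) + k + 1 - 2 * (l + 1) = k by omega, Nat.add_sub_cancel_left]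
    ring

lemma UDb_eq_sum (n : ℕ) :
    UDb n = ∑ σ : Equiv.Perm (Fin n), X 0 ^ udRunCount n σ * X 1 ^ (n - udRunCount n σ) := by
  simp only [UDb, udRunNum, mul_assoc]
  exact sum_card_filter_mul_eq_sum _ (fun σ => mem_range.2 (Nat.lt_succ_of_le (udRunCount_le σ))) _

lemma Lb_eq_sum {n : ℕ} (hn : n ≠ 0) :
    Lb n = ∑ σ : Equiv.Perm (Fin n),
      X 0 ^ (2 * leftPeakCount n σ + 1) * X 1 ^ (n - 2 * leftPeakCount n σ) := by
  simp only [Lb, leftPeakNum, mul_assoc]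
  refine sum_card_filter_mul_eq_sum _ (fun σ => mem_range.2 ?_) _
  have := udRunCount_le σ
  have := udRunCount_eq_leftPeakCount_add_extPeakCount σ hn
  have := extPeakCount_eq_leftPeakCount_or σ hn
  omega

lemma Wb_eq_sum {n : ℕ} (hn : n ≠ 0) :
    Wb n = ∑ σ : Equiv.Perm (Fin n),
      X 0 ^ (2 * extPeakCount n σ) * X 1 ^ (n + 1 - 2 * extPeakCount n σ) := by
  simp only [Wb, if_neg hn, extPeakNum, mul_assoc]
  refine sum_card_filter_mul_eq_sum _ (fun σ => mem_Icc.2 ?_) _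
  have := udRunCount_le σ
  have := udRunCount_eq_leftPeakCount_add_extPeakCount σ hn
  have := extPeakCount_eq_leftPeakCount_or σ hn
  have := extPeakCount_eq_card_valleysIn_add_one σ hn
  omega

/-- `(x + y)·Λ_n(x,y) = L_n(x,y) + W_n(x,y)`. -/
theorem stmt_16 (n : ℕ) : (X 0 + X 1) * UDb n = Lb n + Wb n := by
  rcases eq_or_ne n 0 with rfl | hn
  · simp [UDb_eq_sum, Lb, Wb, leftPeakNum, leftPeakCount, udRunCount]
  rw [UDb_eq_sum, Lb_eq_sum hn, Wb_eq_sum hn, mul_sum, ← sum_add_distrib]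
  refine sum_congr rfl fun σ _ => ?_
  have hud := udRunCount_eq_leftPeakCount_add_extPeakCount σ hn
  rw [hud]
  exact add_mul_monomial_eq_peak_monomials _ _ (extPeakCount_eq_leftPeakCount_or σ hn)
    (hud ▸ udRunCount_le σ)
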